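/- arXiv:1405.3780 — 3 statements merged into one kernel-verified Lean document; each statement's English description precedes it below -/
import Mathlib

section
/- In Q8 with the Gray map swapper, for all x, y, z ∈ Q8: (xy : z) = (x : z)·(y : z) and (z : xy) = (z : x)·(z : y). -/
/-- The Gray map Φ : Q8 → Z2⁴ : 1 ↦ 0000, a ↦ 0101, a² ↦ 1111, a³ ↦ 1010,
b ↦ 0110, a³b ↦ 0011, a²b ↦ 1001, ab ↦ 1100 (here b = xa 0, so ab = xa 3, etc.). -/
def grayQ8 : QuaternionGroup 2 → Fin 4 → ZMod 2
  | QuaternionGroup.a i =>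
      if i = 0 then ![0, 0, 0, 0] else if i = 1 then ![0, 1, 0, 1]
      else if i = 2 then ![1, 1, 1, 1] else ![1, 0, 1, 0]
  | QuaternionGroup.xa i =>
      if i = 0 then ![0, 1, 1, 0] else if i = 1 then ![0, 0, 1, 1]
      else if i = 2 then ![1, 0, 0, 1] else ![1, 1, 0, 0]

def swpL (x z : QuaternionGroup 2) : QuaternionGroup 2 :=
  if grayQ8 (x * z) = grayQ8 x + grayQ8 z then 1 else QuaternionGroup.a 2

def swpR (z x : QuaternionGroup 2) : QuaternionGroup 2 :=
  if grayQ8 (z * x) = grayQ8 z + grayQ8 x then 1 else QuaternionGroup.a 2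

lemma grayInj : ∀ a b : QuaternionGroup 2, grayQ8 a = grayQ8 b → a = b := by decide

lemma swpL_spec : ∀ x z : QuaternionGroup 2,
    grayQ8 (swpL x z * x * z) = grayQ8 x + grayQ8 z := by decide

lemma swpR_spec : ∀ z x : QuaternionGroup 2,
    grayQ8 (swpR z x * z * x) = grayQ8 z + grayQ8 x := by decide

lemma swpL_mul : ∀ x y z : QuaternionGroup 2,
    swpL (x * y) z = swpL x z * swpL y z := by decide

lemma swpR_mul : ∀ x y z : QuaternionGroup 2,
    swpR z (x * y) = swpR z x * swpR z y := by decide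

lemma swpL_unique (x z s : QuaternionGroup 2)
    (h : grayQ8 (s * x * z) = grayQ8 x + grayQ8 z) : s = swpL x z := by
  have := swpL_spec x z
  have h2 := grayInj _ _ (h.trans this.symm)
  exact mul_right_cancel (mul_right_cancel h2)

lemma swpR_unique (z x s : QuaternionGroup 2)
    (h : grayQ8 (s * z * x) = grayQ8 z + grayQ8 x) : s = swpR z x := by
  have := swpR_spec z x
  have h2 := grayInj _ _ (h.trans this.symm)
  exact mul_right_cancel (mul_right_cancel h2)

/-- For swappers in Q8: (xy : z) = (x : z)·(y : z) and (z : xy) = (z : x)·(z : y). -/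
theorem stmt_10 (x y z : QuaternionGroup 2) :
    (∀ s t u : QuaternionGroup 2,
        grayQ8 (s * (x * y) * z) = grayQ8 (x * y) + grayQ8 z →
        grayQ8 (t * x * z) = grayQ8 x + grayQ8 z →
        grayQ8 (u * y * z) = grayQ8 y + grayQ8 z → s = t * u) ∧
    (∀ s t u : QuaternionGroup 2,
        grayQ8 (s * z * (x * y)) = grayQ8 z + grayQ8 (x * y) →
        grayQ8 (t * z * x) = grayQ8 z + grayQ8 x →
        grayQ8 (u * z * y) = grayQ8 z + grayQ8 y → s = t * u) := by
  constructor
  · intro s t u h1 h2 h3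
    rw [swpL_unique _ _ _ h1, swpL_unique _ _ _ h2, swpL_unique _ _ _ h3, swpL_mul]
  · intro s t u h1 h2 h3
    rw [swpR_unique _ _ _ h1, swpR_unique _ _ _ h2, swpR_unique _ _ _ h3, swpR_mul]
end

section
/- Let G = Z2^{k1} × Z4^{k2} × Q8^{k3} and let x, y ∈ G with [x, y] = e. Then wt((xy)^2) = wt(x^2) + wt(y^2) − 2·wt((x : y)), where wt(t) denotes the Hamming weight of the Gray image Φ(t) ∈ Z2^{k1+2k2+4k3}. -/
/-!
The Gray map, its weight and the swapper all act coordinatewise, so the identity is the sum of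
one identity per coordinate. On a `ZMod 2` coordinate all four terms vanish: squares are trivial
and the Gray map is additive. On a `ZMod 4` or `Q₈` coordinate, `(ab)² = a²b²` for commuting
`a, b`; the squares and the swapper lie in `{1, z}` with `z` the central involution, whose Gray
image is all ones, and the swapper equals `z` exactly when `a²` and `b²` both do. These two
finite cases are checked exhaustively.
-/

/-- The group G = Z2^{k1} × Z4^{k2} × Q8^{k3}. -/
abbrev Gq (k1 k2 k3 : ℕ) : Type :=
  (Fin k1 → Multiplicative (ZMod 2)) × (Fin k2 → Multiplicative (ZMod 4)) ×
    (Fin k3 → QuaternionGroup 2)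

/-- The Gray map φ : Z4 → Z2² : 0 ↦ 00, 1 ↦ 01, 2 ↦ 11, 3 ↦ 10. -/
def grayZ4 : ZMod 4 → Fin 2 → ZMod 2 := fun x =>
  if x = 0 then ![0, 0] else if x = 1 then ![0, 1] else if x = 2 then ![1, 1] else ![1, 0]

/-- The componentwise Gray map on G = Z2^{k1} × Z4^{k2} × Q8^{k3}. -/
def grayG {k1 k2 k3 : ℕ} (x : Gq k1 k2 k3) :
    (Fin k1 → ZMod 2) × (Fin k2 → Fin 2 → ZMod 2) × (Fin k3 → Fin 4 → ZMod 2) :=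
  (fun i => Multiplicative.toAdd (x.1 i),
   fun j => grayZ4 (Multiplicative.toAdd (x.2.1 j)),
   fun j => grayQ8 (x.2.2 j))

/-- Hamming weight of the Gray image of an element of G. -/
def wtG {k1 k2 k3 : ℕ} (x : Gq k1 k2 k3) : ℕ :=
  (Finset.univ.filter fun i => (grayG x).1 i ≠ 0).card
    + ∑ j : Fin k2, (Finset.univ.filter fun b => (grayG x).2.1 j b ≠ 0).card
    + ∑ j : Fin k3, (Finset.univ.filter fun b => (grayG x).2.2 j b ≠ 0).card

/-- The element u of G whose Gray image is the all-ones vector. -/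
def uG (k1 k2 k3 : ℕ) : Gq k1 k2 k3 :=
  (fun _ => Multiplicative.ofAdd (1 : ZMod 2),
   fun _ => Multiplicative.ofAdd (2 : ZMod 4),
   fun _ => QuaternionGroup.a 2)

open scoped commutatorElement

open Finset Multiplicative

def wtZ4 (a : Multiplicative (ZMod 4)) : ℕ := hammingNorm (grayZ4 (toAdd a))

def wtQ8 (a : QuaternionGroup 2) : ℕ := hammingNorm (grayQ8 a)

lemma wtZ4_mul_sq (a b c : Multiplicative (ZMod 4))
    (h : grayZ4 (toAdd (c * a * b)) = grayZ4 (toAdd a) + grayZ4 (toAdd b)) :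
    (wtZ4 ((a * b) ^ 2) : ℤ) = wtZ4 (a ^ 2) + wtZ4 (b ^ 2) - 2 * wtZ4 c := by
  revert a b c; unfold wtZ4; decide

lemma wtQ8_mul_sq {a b : QuaternionGroup 2} (hab : Commute a b) (c : QuaternionGroup 2)
    (h : grayQ8 (c * a * b) = grayQ8 a + grayQ8 b) :
    (wtQ8 ((a * b) ^ 2) : ℤ) = wtQ8 (a ^ 2) + wtQ8 (b ^ 2) - 2 * wtQ8 c := by
  revert a b c; unfold wtQ8 Commute SemiconjBy; decide

section

variable {k1 k2 k3 : ℕ}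

lemma wtG_eq (x : Gq k1 k2 k3) :
    wtG x = hammingNorm (grayG x).1 + ∑ j, wtZ4 (x.2.1 j) + ∑ j, wtQ8 (x.2.2 j) :=
  rfl

lemma grayG_sq_fst (x : Gq k1 k2 k3) : (grayG (x ^ 2)).1 = 0 := by
  funext i
  simp [grayG, toAdd_pow, CharTwo.two_eq_zero]

lemma grayG_fst_eq_zero_of_swapper {x y s : Gq k1 k2 k3}
    (hs : grayG (s * x * y) = grayG x + grayG y) : (grayG s).1 = 0 := by
  funext i
  simpa [grayG, add_assoc] using congrFun (congrArg Prod.fst hs) i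

end

/-- If x, y ∈ G commute, then wt((xy)²) = wt(x²) + wt(y²) − 2·wt((x : y)). -/
theorem stmt_17 (k1 k2 k3 : ℕ) (x y s : Gq k1 k2 k3)
    (hcomm : ⁅x, y⁆ = 1)
    (hs : grayG (s * x * y) = grayG x + grayG y) :
    (wtG ((x * y) ^ 2) : ℤ) = (wtG (x ^ 2) : ℤ) + wtG (y ^ 2) - 2 * wtG s := by
  have hxy : Commute x.2.2 y.2.2 :=
    ((commutatorElement_eq_one_iff_commute.mp hcomm).map (MonoidHom.snd _ _)).map
      (MonoidHom.snd _ _)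
  have hZ4 j := wtZ4_mul_sq _ _ _ (congrFun (congrArg (·.2.1) hs) j)
  have hQ8 j := wtQ8_mul_sq (a := x.2.2 j) (b := y.2.2 j) (hxy.map (Pi.evalMonoidHom _ j)) _
    (congrFun (congrArg (·.2.2) hs) j)
  simp only [wtG_eq, Prod.pow_fst, Prod.pow_snd, Prod.fst_mul, Prod.snd_mul, Pi.pow_apply,
    Pi.mul_apply, grayG_sq_fst, grayG_fst_eq_zero_of_swapper hs, hammingNorm_zero, zero_add]
  push_cast
  simp only [hZ4, hQ8, sum_sub_distrib, sum_add_distrib, ← mul_sum]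
  ring
end

section
/- Let C be a subgroup of G = Z2^{k1} × Z4^{k2} × Q8^{k3} such that Φ(C) is a Hadamard code and let a, b, c ∈ C be elements of order 4 such that a^2 = u, and b^2 = c^2 = [b, c] with b^2 ∉ {e, u}. Then [a, b] = e or [a, c] = e or [a, bc] = e. -/
open scoped commutatorElement

/-!
Commutators in `G` have trivial `Z2` and `Z4` parts and `Q8` parts in the centre `{±1}` of `Q8`;
call such elements sign elements. A sign element has Gray weight four times the number of its
`-1` coordinates, and is determined by that set. Here `w = b² = c² = [b, c]` is a sign element
other than `e` and `u`, so the Hadamard property forces its weight to be `n / 2`. For `y ∈ {b, c}`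
the commutator `[a, y]` is a sign element of `C` whose `-1` coordinates lie among those of
`y² = w`; its weight is at most `n / 2`, so `[a, y] ∈ {e, w}`. Finally, if `[a, b] = [a, c] = w`,
then `[a, bc] = [a, b] · b [a, c] b⁻¹ = w² = e`, as `w` is central of order two.
-/

namespace QuaternionGroup

lemma commutatorElement_eq_one_or_eq_a_two (x y : QuaternionGroup 2) :
    ⁅x, y⁆ = 1 ∨ ⁅x, y⁆ = a 2 := by
  revert x y; decide

lemma sq_eq_a_two_of_commutatorElement_eq (x y : QuaternionGroup 2) (h : ⁅x, y⁆ = a 2) :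
    y ^ 2 = a 2 := by
  revert x y; decide

lemma commute_a_two (y : QuaternionGroup 2) : Commute (a 2) y := by
  revert y; unfold Commute SemiconjBy; decide

end QuaternionGroup

open QuaternionGroup

namespace Gq

variable {k1 k2 k3 : ℕ}

/-- Elements of the commutator subgroup `1 × 1 × {±1}^k3` of `G`, where `-1 = a 2` in `Q8`. -/
def IsSign (x : Gq k1 k2 k3) : Prop :=
  x.1 = 1 ∧ x.2.1 = 1 ∧ ∀ j, x.2.2 j = 1 ∨ x.2.2 j = a 2

def signSupport (x : Gq k1 k2 k3) : Finset (Fin k3) :=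
  Finset.univ.filter fun j => x.2.2 j = a 2

lemma isSign_one : IsSign (1 : Gq k1 k2 k3) := ⟨rfl, rfl, fun _ => Or.inl rfl⟩

lemma isSign_commutatorElement (x y : Gq k1 k2 k3) : IsSign ⁅x, y⁆ :=
  ⟨funext fun _ => commutatorElement_eq_one_iff_mul_comm.2 (mul_comm _ _),
    funext fun _ => commutatorElement_eq_one_iff_mul_comm.2 (mul_comm _ _),
    fun j => commutatorElement_eq_one_or_eq_a_two (x.2.2 j) (y.2.2 j)⟩

lemma signSupport_commutatorElement_subset (x y : Gq k1 k2 k3) :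
    signSupport ⁅x, y⁆ ⊆ signSupport (y ^ 2) := by
  intro j hj
  simp only [signSupport, Finset.mem_filter, Finset.mem_univ, true_and] at hj ⊢
  exact sq_eq_a_two_of_commutatorElement_eq (x.2.2 j) (y.2.2 j) hj

namespace IsSign

variable {x y : Gq k1 k2 k3}

lemma eq_of_signSupport_eq (hx : IsSign x) (hy : IsSign y) (h : signSupport x = signSupport y) :
    x = y := by
  refine Prod.ext (hx.1.trans hy.1.symm) (Prod.ext (hx.2.1.trans hy.2.1.symm) (funext fun j => ?_))
  have hj : x.2.2 j = a 2 ↔ y.2.2 j = a 2 := by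
    simpa [signSupport] using congrArg (j ∈ ·) h
  rcases hx.2.2 j with h1 | h1 <;> rcases hy.2.2 j with h2 | h2 <;> simp_all

lemma commute (hx : IsSign x) (z : Gq k1 k2 k3) : Commute x z := by
  refine Prod.ext ?_ (Prod.ext ?_ (funext fun j => ?_))
  · simp [hx.1]
  · simp [hx.2.1]
  · rcases hx.2.2 j with h | h
    · simp [h]
    · exact (h ▸ commute_a_two (z.2.2 j) :)

lemma mul_self (hx : IsSign x) : x * x = 1 := by
  refine Prod.ext ?_ (Prod.ext ?_ (funext fun j => ?_))
  · simp [hx.1]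
  · simp [hx.2.1]
  · rcases hx.2.2 j with h | h
    · simp [h]
    · exact (h ▸ (by decide : a 2 * a 2 = (1 : QuaternionGroup 2)) :)

lemma wtG_eq (hx : IsSign x) : wtG x = 4 * (signSupport x).card := by
  have hQ8 (j : Fin k3) : (Finset.univ.filter fun b => grayQ8 (x.2.2 j) b ≠ 0).card =
      if x.2.2 j = a 2 then 4 else 0 := by
    rcases hx.2.2 j with h | h <;> rw [h] <;> decide
  have hZ4 : (Finset.univ.filter fun b => grayZ4 0 b ≠ 0).card = 0 := by decide
  simp only [wtG, grayG, hx.1, hx.2.1, hQ8, Pi.one_apply, toAdd_one, hZ4]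
  simp [signSupport, Finset.sum_ite, mul_comm]

lemma wtG_ne (hx : IsSign x) (hxu : x ≠ uG k1 k2 k3) : wtG x ≠ k1 + 2 * k2 + 4 * k3 := by
  intro h
  have hcard : (signSupport x).card ≤ k3 := by simpa using (signSupport x).card_le_univ
  rw [hx.wtG_eq] at h
  obtain ⟨rfl, rfl, hfull⟩ : k1 = 0 ∧ k2 = 0 ∧ (signSupport x).card = k3 := by omega
  refine hxu (Prod.ext (funext nofun) (Prod.ext (funext nofun) (funext fun j => ?_)))
  have hj : j ∈ signSupport x :=
    Finset.eq_univ_of_card _ (by rw [hfull, Fintype.card_fin]) ▸ Finset.mem_univ j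
  simpa [signSupport, uG] using hj

end IsSign

/-- The weight condition satisfied by a subgroup `C` whose Gray image is a Hadamard code:
every nonzero codeword has weight `n / 2` or `n`, where `n` is the length of `Φ(C)`. -/
def HasHadamardWeights (C : Subgroup (Gq k1 k2 k3)) : Prop :=
  ∀ x ∈ C, x ≠ 1 → 2 * wtG x = k1 + 2 * k2 + 4 * k3 ∨ wtG x = k1 + 2 * k2 + 4 * k3

namespace HasHadamardWeights

variable {C : Subgroup (Gq k1 k2 k3)}

/-- `w` has weight `n / 2`, and a nontrivial `x` supported inside it has weight at most `n / 2`,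
hence exactly `n / 2`, so that `x` and `w` have the same support. -/
lemma eq_one_or_eq_of_signSupport_subset (hC : HasHadamardWeights C)
    {w x : Gq k1 k2 k3} (hwC : w ∈ C) (hxC : x ∈ C) (hw : IsSign w) (hx : IsSign x)
    (hw1 : w ≠ 1) (hwu : w ≠ uG k1 k2 k3) (hxw : signSupport x ⊆ signSupport w) :
    x = 1 ∨ x = w := by
  by_cases hx1 : x = 1
  · exact Or.inl hx1
  have hwt := (hC w hwC hw1).resolve_right (hw.wtG_ne hwu)
  have hle := Finset.card_le_card hxw
  rw [hw.wtG_eq] at hwt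
  rcases hC x hxC hx1 with h | h <;> rw [hx.wtG_eq] at h
  · exact Or.inr (hx.eq_of_signSupport_eq hw (Finset.eq_of_subset_of_card_le hxw (by omega)))
  · refine absurd (hw.eq_of_signSupport_eq isSign_one ?_) hw1
    rw [Finset.card_eq_zero.1 (show (signSupport w).card = 0 by omega)]
    simp [signSupport, show (1 : QuaternionGroup 2) ≠ a 2 by decide]

lemma commutatorElement_eq_one_or_eq_sq (hC : HasHadamardWeights C)
    {x y : Gq k1 k2 k3} (hxC : x ∈ C) (hyC : y ∈ C) (hy : IsSign (y ^ 2))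
    (hy1 : y ^ 2 ≠ 1) (hyu : y ^ 2 ≠ uG k1 k2 k3) : ⁅x, y⁆ = 1 ∨ ⁅x, y⁆ = y ^ 2 := by
  have hxyC : ⁅x, y⁆ ∈ C := by
    rw [commutatorElement_def]
    exact mul_mem (mul_mem (mul_mem hxC hyC) (inv_mem hxC)) (inv_mem hyC)
  exact hC.eq_one_or_eq_of_signSupport_subset (pow_mem hyC 2) hxyC hy
    (isSign_commutatorElement x y) hy1 hyu (signSupport_commutatorElement_subset x y)

end HasHadamardWeights

end Gq

lemma commutatorElement_mul_right_eq_one {G : Type*} [Group G] {a b c w : G}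
    (hwb : Commute w b) (hww : w * w = 1) (hb : ⁅a, b⁆ = w) (hc : ⁅a, c⁆ = w) :
    ⁅a, b * c⁆ = 1 := by
  rw [commutatorElement_mul_right_eq_mul_conj, hb, hc, mul_assoc w b w, ← hwb.eq, ← mul_assoc,
    hww, one_mul, mul_inv_cancel]

open Gq in
theorem stmt_19_general (k1 k2 k3 : ℕ) (C : Subgroup (Gq k1 k2 k3))
    (n : ℕ) (hn : n = k1 + 2 * k2 + 4 * k3)
    (hHad : ∀ x ∈ C, x ≠ 1 → 2 * wtG x = n ∨ wtG x = n)
    (a b c : Gq k1 k2 k3) (ha : a ∈ C) (hb : b ∈ C) (hc : c ∈ C)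
    (hbc : b ^ 2 = c ^ 2) (hbcc : b ^ 2 = ⁅b, c⁆)
    (hbne : b ^ 2 ≠ 1) (hbnu : b ^ 2 ≠ uG k1 k2 k3) :
    ⁅a, b⁆ = 1 ∨ ⁅a, c⁆ = 1 ∨ ⁅a, b * c⁆ = 1 := by
  subst hn
  have hw : IsSign (b ^ 2) := hbcc ▸ isSign_commutatorElement b c
  rcases HasHadamardWeights.commutatorElement_eq_one_or_eq_sq hHad ha hb hw hbne hbnu
    with hab | hab
  · exact Or.inl hab
  rcases HasHadamardWeights.commutatorElement_eq_one_or_eq_sq hHad ha hc (hbc ▸ hw)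
    (hbc ▸ hbne) (hbc ▸ hbnu) with hac | hac
  · exact Or.inr (Or.inl hac)
  exact Or.inr (Or.inr
    (commutatorElement_mul_right_eq_one (hw.commute b) hw.mul_self hab (hac.trans hbc.symm)))

/-- Hadamard-code lemma: if a, b, c ∈ C have order 4, a² = u and
b² = c² = [b,c] ∉ {e, u}, then [a,b] = e or [a,c] = e or [a,bc] = e. -/
theorem stmt_19 (k1 k2 k3 : ℕ) (C : Subgroup (Gq k1 k2 k3))
    (n : ℕ) (hn : n = k1 + 2 * k2 + 4 * k3)
    (hHad : ∀ x ∈ C, x ≠ 1 → 2 * wtG x = n ∨ wtG x = n)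
    (a b c : Gq k1 k2 k3) (ha : a ∈ C) (hb : b ∈ C) (hc : c ∈ C)
    (ha4 : orderOf a = 4) (hb4 : orderOf b = 4) (hc4 : orderOf c = 4)
    (hau : a ^ 2 = uG k1 k2 k3)
    (hbc : b ^ 2 = c ^ 2) (hbcc : b ^ 2 = ⁅b, c⁆)
    (hbne : b ^ 2 ≠ 1) (hbnu : b ^ 2 ≠ uG k1 k2 k3) :
    ⁅a, b⁆ = 1 ∨ ⁅a, c⁆ = 1 ∨ ⁅a, b * c⁆ = 1 :=
  stmt_19_general k1 k2 k3 C n hn hHad a b c ha hb hc hbc hbcc hbne hbnu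
end
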